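/- Let f(x,·) satisfy the μ-PL condition ½‖∇ᵧf(x,y)‖² ≥ μ(Φ(x) - f(x,y)) where Φ(x) = max_y f(x,y), and suppose f(x,·) has L₂-Lipschitz gradient in y. Then for 0 < γ ≤ 1/(2L₂) and y⁺ = y + γ d (ascent step with direction d), Φ(x) - f(x,y⁺) ≤ (1 - μγ/2)(Φ(x) - f(x,y)) - (γ/4)‖∇ᵧf(x,y)‖² + (γ/2)‖∇ᵧf(x,y) - d‖² - (γ/4)‖d‖². -/

import Mathlib

/-!
The descent lemma for an `L₂`-Lipschitz gradient bounds the gain of the step from below by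
`γ⟪∇ᵧf, d⟫ - (L₂γ²/2)‖d‖²`. Polarization writes `2⟪∇ᵧf, d⟫` as
`‖∇ᵧf‖² + ‖d‖² - ‖∇ᵧf - d‖²`; the step-size bound `L₂γ ≤ 1/2` absorbs the curvature term into
`(γ/4)‖d‖²`, and the PL inequality converts half of `(γ/2)‖∇ᵧf‖²` into `(μγ/2)(Φ(x) - f(x,y))`.
-/

open InnerProductSpace Set

section LipschitzGradient

variable {F : Type*} [NormedAddCommGroup F] [InnerProductSpace ℝ F] [CompleteSpace F]
  {f : F → ℝ} {g : F → F} {L : ℝ}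

theorem HasGradientAt.hasDerivAt_comp_line {y v : F} {t : ℝ}
    (hf : HasGradientAt f (g (y + t • v)) (y + t • v)) :
    HasDerivAt (fun s : ℝ => f (y + s • v)) ⟪g (y + t • v), v⟫_ℝ t := by
  have hline : HasDerivAt (fun s : ℝ => y + s • v) v t := by
    simpa using ((hasDerivAt_id t).smul_const v).const_add y
  have h := hf.hasFDerivAt.comp_hasDerivAt t hline
  simp only [toDual_apply_apply] at h
  exact h

theorem add_inner_sub_sq_le_of_lipschitz_gradient
    (hg : ∀ y, HasGradientAt f (g y) y)
    (hlip : ∀ y₁ y₂, ‖g y₁ - g y₂‖ ≤ L * ‖y₁ - y₂‖) (y v : F) :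
    f y + ⟪g y, v⟫_ℝ - L / 2 * ‖v‖ ^ 2 ≤ f (y + v) := by
  -- `ψ 1 - ψ 0` is the claimed gap, and `ψ` is monotone on `t ≥ 0` by the Lipschitz bound.
  set ψ : ℝ → ℝ := fun t => f (y + t • v) - t * ⟪g y, v⟫_ℝ + L / 2 * t ^ 2 * ‖v‖ ^ 2
  have hψ : ∀ t, HasDerivAt ψ (⟪g (y + t • v), v⟫_ℝ - ⟪g y, v⟫_ℝ + L * t * ‖v‖ ^ 2) t := by
    intro t
    have := (((hg (y + t • v)).hasDerivAt_comp_line (y := y)).sub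
      ((hasDerivAt_id t).mul_const ⟪g y, v⟫_ℝ)).add
      (((hasDerivAt_pow 2 t).const_mul (L / 2)).mul_const (‖v‖ ^ 2))
    refine this.congr_deriv ?_
    simp only [Nat.cast_ofNat]; ring
  have hψ' : ∀ t ∈ Ioi (0 : ℝ), 0 ≤ ⟪g (y + t • v), v⟫_ℝ - ⟪g y, v⟫_ℝ + L * t * ‖v‖ ^ 2 := by
    intro t ht
    have hlow : -⟪g (y + t • v) - g y, v⟫_ℝ ≤ L * t * ‖v‖ ^ 2 := calc
      -⟪g (y + t • v) - g y, v⟫_ℝ ≤ ‖g (y + t • v) - g y‖ * ‖v‖ :=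
        (neg_le_abs _).trans (abs_real_inner_le_norm _ _)
      _ ≤ L * (t * ‖v‖) * ‖v‖ := by
        gcongr
        simpa [norm_smul, abs_of_pos (mem_Ioi.mp ht)] using hlip (y + t • v) y
      _ = L * t * ‖v‖ ^ 2 := by ring
    rw [inner_sub_left] at hlow
    linarith
  have hmono : MonotoneOn ψ (Ici 0) :=
    monotoneOn_of_hasDerivWithinAt_nonneg (convex_Ici 0)
      (fun t _ => (hψ t).continuousAt.continuousWithinAt)
      (fun t _ => (hψ t).hasDerivWithinAt) (by simpa using hψ')
  have := hmono self_mem_Ici (show (1 : ℝ) ∈ Ici 0 by norm_num) zero_le_one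
  simp only [ψ, zero_smul, add_zero, one_smul, zero_mul, one_mul, sq, mul_zero,
    sub_zero, mul_one] at this
  linarith

end LipschitzGradient

theorem stmt_19_general
    {E F : Type*}
    [NormedAddCommGroup F] [InnerProductSpace ℝ F] [CompleteSpace F]
    (f : E → F → ℝ) (Φ : E → ℝ) (gy : E → F → F)
    (μ L₂ : ℝ) (hL₂ : 0 < L₂)
    (hgrad : ∀ x y, HasGradientAt (fun y' => f x y') (gy x y) y)
    (hlip : ∀ x y₁ y₂, ‖gy x y₁ - gy x y₂‖ ≤ L₂ * ‖y₁ - y₂‖)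
    (hPL : ∀ x y, μ * (Φ x - f x y) ≤ (1 / 2) * ‖gy x y‖ ^ 2)
    (x : E) (y d : F) (γ : ℝ) (hγ : 0 < γ) (hγ' : γ ≤ 1 / (2 * L₂)) :
    Φ x - f x (y + γ • d) ≤
      (1 - μ * γ / 2) * (Φ x - f x y) - (γ / 4) * ‖gy x y‖ ^ 2 +
        (γ / 2) * ‖gy x y - d‖ ^ 2 - (γ / 4) * ‖d‖ ^ 2 := by
  have hascent := add_inner_sub_sq_le_of_lipschitz_gradient (hgrad x) (hlip x) y (γ • d)
  rw [real_inner_smul_right, norm_smul, Real.norm_eq_abs, abs_of_pos hγ, mul_pow] at hascent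
  have hstep : L₂ * γ ≤ 1 / 2 := by
    rw [le_div_iff₀ (by positivity)] at hγ'
    linarith
  have hcurv : L₂ * γ * γ * ‖d‖ ^ 2 ≤ 1 / 2 * γ * ‖d‖ ^ 2 := by gcongr
  have hPLγ := mul_le_mul_of_nonneg_left (hPL x y) hγ.le
  rw [norm_sub_sq_real]
  linarith

/-- Contraction of the maximization residual under a PL ascent step: if
`f(x,·)` satisfies the μ-PL condition with `Φ(x) = max_y f(x,y)`, `∇ᵧf` is
`L₂`-Lipschitz in `y`, `0 < γ ≤ 1/(2L₂)` and `y⁺ = y + γ d`, then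
`Φ(x) - f(x,y⁺) ≤ (1 - μγ/2)(Φ(x) - f(x,y)) - (γ/4)‖∇ᵧf(x,y)‖²
  + (γ/2)‖∇ᵧf(x,y) - d‖² - (γ/4)‖d‖²`. -/
theorem stmt_19
    {E F : Type*} [NormedAddCommGroup E] [InnerProductSpace ℝ E]
    [NormedAddCommGroup F] [InnerProductSpace ℝ F] [CompleteSpace F]
    (f : E → F → ℝ) (Φ : E → ℝ) (gy : E → F → F)
    (μ L₂ : ℝ) (hμ : 0 < μ) (hL₂ : 0 < L₂)
    (hmax : ∀ x y, f x y ≤ Φ x)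
    (hattain : ∀ x, ∃ y, f x y = Φ x)
    (hgrad : ∀ x y, HasGradientAt (fun y' => f x y') (gy x y) y)
    (hlip : ∀ x y₁ y₂, ‖gy x y₁ - gy x y₂‖ ≤ L₂ * ‖y₁ - y₂‖)
    (hPL : ∀ x y, μ * (Φ x - f x y) ≤ (1 / 2) * ‖gy x y‖ ^ 2)
    (x : E) (y d : F) (γ : ℝ) (hγ : 0 < γ) (hγ' : γ ≤ 1 / (2 * L₂)) :
    Φ x - f x (y + γ • d) ≤
      (1 - μ * γ / 2) * (Φ x - f x y) - (γ / 4) * ‖gy x y‖ ^ 2 +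
        (γ / 2) * ‖gy x y - d‖ ^ 2 - (γ / 4) * ‖d‖ ^ 2 :=
  stmt_19_general f Φ gy μ L₂ hL₂ hgrad hlip hPL x y d γ hγ hγ'
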